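/- Let α ≥ 1 be real. If there exists a sequence (e_n) tending to 0 such that for all n ≥ 1, (a_{n+1}-a_n)/a_{n+1} ≥ (α/n)(1+e_n), then limsup_{n→∞} (log n)/(log a_n) ≤ 1/α. -/

import Mathlib

/-!
If `(aₙ₊₁ - aₙ)/aₙ₊₁ ≥ c/n` from some point on, then, as `log t ≤ t - 1`,
`log aₙ₊₁ - log aₙ ≥ (aₙ₊₁ - aₙ)/aₙ₊₁ ≥ c/n ≥ c (log (n+1) - log n)`. So `log aₙ - c log n` is
eventually nondecreasing, `log aₙ ≥ c log n + O(1)`, and `limsup log n / log aₙ ≤ 1/c`.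
Every `c < α` is eventually admissible since `eₙ → 0`; letting `c → α` gives `1/α`.
-/

open Filter Topology Real

lemma sub_div_le_log_sub_log {x y : ℝ} (hx : 0 < x) (hy : 0 < y) :
    (y - x) / y ≤ log y - log x := by
  have := one_sub_inv_le_log_of_pos (div_pos hy hx)
  rwa [inv_div, one_sub_div hy.ne', log_div hy.ne' hx.ne'] at this

lemma log_succ_sub_log_le_inv {n : ℕ} (hn : 1 ≤ n) :
    log ((n + 1 : ℕ) : ℝ) - log n ≤ 1 / n := by
  have hn' : (0 : ℝ) < n := by exact_mod_cast hn
  have := log_le_sub_one_of_pos (div_pos (by positivity : (0 : ℝ) < n + 1) hn')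
  rw [log_div (by positivity) hn'.ne', add_div, div_self hn'.ne'] at this
  push_cast
  linarith

lemma log_sub_mul_log_le_of_gap {x : ℕ → ℝ} (hx : ∀ n, 0 < x n) {c : ℝ} (hc : 0 ≤ c) {N : ℕ}
    (hN : 1 ≤ N) (hgap : ∀ n ≥ N, c / n ≤ (x (n + 1) - x n) / x (n + 1)) :
    ∀ n ≥ N, log (x N) - c * log N ≤ log (x n) - c * log n := by
  intro n hn
  induction n, hn using Nat.le_induction with
  | base => rfl
  | succ n hn ih =>
    have hstep : c * (log ((n + 1 : ℕ) : ℝ) - log n) ≤ log (x (n + 1)) - log (x n) :=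
      calc c * (log ((n + 1 : ℕ) : ℝ) - log n)
          ≤ c * (1 / n) := mul_le_mul_of_nonneg_left (log_succ_sub_log_le_inv (hN.trans hn)) hc
        _ = c / n := mul_one_div c n
        _ ≤ (x (n + 1) - x n) / x (n + 1) := hgap n hn
        _ ≤ log (x (n + 1)) - log (x n) := sub_div_le_log_sub_log (hx n) (hx (n + 1))
    linarith

lemma limsup_log_div_log_le_of_log_ge {x : ℕ → ℝ} {c K : ℝ} (hc : 0 < c)
    (hx : ∀ᶠ n : ℕ in atTop, c * log n + K ≤ log (x n)) :
    limsup (fun n : ℕ => log n / log (x n)) atTop ≤ 1 / c := by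
  have hlog : Tendsto (fun n : ℕ => log n) atTop atTop :=
    tendsto_log_atTop.comp tendsto_natCast_atTop_atTop
  have hlower : ∀ᶠ n : ℕ in atTop, 0 < c * log n + K :=
    (tendsto_atTop_add_const_right atTop K (hlog.const_mul_atTop hc)).eventually_gt_atTop 0
  have hbound : Tendsto (fun n : ℕ => log n / (c * log n + K)) atTop (𝓝 (1 / c)) := by
    have hden : Tendsto (fun n : ℕ => c + K / log n) atTop (𝓝 c) := by
      simpa using tendsto_const_nhds.add (tendsto_const_nhds.div_atTop hlog)
    rw [one_div]
    refine (hden.inv₀ hc.ne').congr' ?_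
    filter_upwards [hlog.eventually_gt_atTop 0] with n hn
    field_simp
  have hle : (fun n : ℕ => log n / log (x n)) ≤ᶠ[atTop] fun n => log n / (c * log n + K) := by
    filter_upwards [hx, hlower, hlog.eventually_ge_atTop 0] with n hxn hpos hn
    exact div_le_div_of_nonneg_left hn hpos hxn
  have hnonneg : ∀ᶠ n : ℕ in atTop, 0 ≤ log n / log (x n) := by
    filter_upwards [hx, hlower, hlog.eventually_ge_atTop 0] with n hxn hpos hn
    exact div_nonneg hn (hpos.trans_le hxn).le
  calc limsup (fun n : ℕ => log n / log (x n)) atTop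
      ≤ limsup (fun n : ℕ => log n / (c * log n + K)) atTop :=
        limsup_le_limsup hle (isCoboundedUnder_le_of_eventually_le _ hnonneg)
          hbound.isBoundedUnder_le
    _ = 1 / c := hbound.limsup_eq

lemma limsup_log_div_log_le_of_gap {x : ℕ → ℝ} (hx : ∀ n, 0 < x n) {c : ℝ} (hc : 0 < c)
    (hgap : ∀ᶠ n : ℕ in atTop, c / n ≤ (x (n + 1) - x n) / x (n + 1)) :
    limsup (fun n : ℕ => log n / log (x n)) atTop ≤ 1 / c := by
  obtain ⟨N, hN⟩ := eventually_atTop.mp (hgap.and (eventually_ge_atTop 1))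
  refine limsup_log_div_log_le_of_log_ge (K := log (x N) - c * log N) hc ?_
  filter_upwards [eventually_ge_atTop N] with n hn
  have := log_sub_mul_log_le_of_gap hx hc.le (hN N le_rfl).2 (fun m hm ↦ (hN m hm).1) n hn
  linarith

theorem upper_density_le_of_gap_lower_bound_general (a : ℕ → ℕ)
    (hpos : ∀ n, 0 < a n) (α : ℝ) (hα : 1 ≤ α) (e : ℕ → ℝ)
    (he : Tendsto e atTop (nhds 0))
    (h : ∀ n : ℕ, 1 ≤ n →
      (α / n) * (1 + e n) ≤ ((a (n + 1) : ℝ) - a n) / (a (n + 1) : ℝ)) :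
    limsup (fun n : ℕ => Real.log n / Real.log (a n)) atTop ≤ 1 / α := by
  have hα0 : 0 < α := one_pos.trans_le hα
  have hscale : Tendsto (fun n ↦ α * (1 + e n)) atTop (𝓝 α) := by
    simpa using ((tendsto_const_nhds (x := (1 : ℝ))).add he).const_mul α
  have hlimsup : ∀ᶠ c in 𝓝[<] α, limsup (fun n : ℕ => log n / log (a n)) atTop ≤ 1 / c := by
    filter_upwards [Ioo_mem_nhdsLT hα0] with c ⟨hc0, hcα⟩
    refine limsup_log_div_log_le_of_gap (fun n ↦ by exact_mod_cast hpos n) hc0 ?_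
    filter_upwards [hscale.eventually (eventually_ge_nhds hcα), eventually_ge_atTop 1]
      with n hn hn1
    calc c / n ≤ α * (1 + e n) / n := by gcongr
      _ = α / n * (1 + e n) := by ring
      _ ≤ _ := h n hn1
  have hinv : Tendsto (fun c : ℝ ↦ 1 / c) (𝓝[<] α) (𝓝 (1 / α)) :=
    ((continuousAt_const.div continuousAt_id hα0.ne').tendsto).mono_left nhdsWithin_le_nhds
  exact ge_of_tendsto hinv hlimsup

/-- If `gₙ/aₙ₊₁ ≥ (α/n)(1+eₙ)` for all `n ≥ 1` with `eₙ → 0` and `α ≥ 1`, then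
the upper exponential density of `A` is at most `1/α`. -/
theorem upper_density_le_of_gap_lower_bound (a : ℕ → ℕ) (hmono : StrictMono a)
    (hpos : ∀ n, 0 < a n) (α : ℝ) (hα : 1 ≤ α) (e : ℕ → ℝ)
    (he : Tendsto e atTop (nhds 0))
    (h : ∀ n : ℕ, 1 ≤ n →
      (α / n) * (1 + e n) ≤ ((a (n + 1) : ℝ) - a n) / (a (n + 1) : ℝ)) :
    limsup (fun n : ℕ => Real.log n / Real.log (a n)) atTop ≤ 1 / α :=
  upper_density_le_of_gap_lower_bound_general a hpos α hα e he h
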